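/- Let P ⊂ ℝ^{k+1} be a full-dimensional convex polytope, q a line meeting the interior of P in general position, and L any 2-plane containing q. Then N = P ∩ L is a convex polygon containing a segment of q in its interior, and for each vertex v of N not on q, the two sides of N at v lie in two distinct facets of P. -/

import Mathlib

/-!
`P ∩ L` is the image of a slice of a standard simplex by an affine subspace, and an extreme point
of such a slice is determined by its set of zero coordinates, so `N = P ∩ L` is a polytope. As `L`
meets `interior P`, `N` spans `L`, and points of `q` near an interior point of `P` are relatively
interior in `N`.

At a vertex `v` of the polygon `N`, the vertices `w ≠ v` lie in an open half-plane at `v`; the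
extreme slopes of the directions `w - v` give two supporting lines through `v`, i.e. two edges.
The midpoint of an edge maximizes a functional that is not constant on `N`, so it is not interior
to `P`, and a supporting hyperplane of `P` at that midpoint contains the edge. The exposed face it
cuts out contains two points of `L`, so by general position it is a facet. The two facets differ, since otherwise the
hyperplane would contain both edges, hence their span `L`, which meets `interior P`.
-/

open Set

/-- A convex polytope: the convex hull of a finite nonempty set of points. -/
def IsPolytope {n : ℕ} (P : Set (EuclideanSpace ℝ (Fin n))) : Prop :=
  ∃ S : Finset (EuclideanSpace ℝ (Fin n)), S.Nonempty ∧ P = convexHull ℝ (S : Set (EuclideanSpace ℝ (Fin n)))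

/-- The (affine) dimension of a set: the rank of the direction of its affine span. -/
noncomputable def pdim {n : ℕ} (P : Set (EuclideanSpace ℝ (Fin n))) : ℕ :=
  Module.finrank ℝ (affineSpan ℝ P).direction

/-- `F` is a (nonempty, exposed) face of `P` of dimension `c`; note `IsExposed ℝ P P` holds,
so `P` counts as the face of dimension `pdim P`. -/
def IsFaceDim {n : ℕ} (P F : Set (EuclideanSpace ℝ (Fin n))) (c : ℕ) : Prop :=
  IsExposed ℝ P F ∧ F.Nonempty ∧ pdim F = c

/-- `fc P c` is the number of faces of `P` of dimension `c`. -/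
noncomputable def fc {n : ℕ} (P : Set (EuclideanSpace ℝ (Fin n))) (c : ℕ) : ℕ :=
  {F | IsFaceDim P F c}.ncard

open Filter Topology

section StdSimplexSlice

variable {ι : Type*} [Fintype ι]

lemma eq_of_smul_le_of_mem_extremePoints {A : AffineSubspace ℝ (ι → ℝ)} {e e' : ι → ℝ}
    (he : e ∈ (stdSimplex ℝ ι ∩ A).extremePoints ℝ) (he' : e' ∈ stdSimplex ℝ ι ∩ A) {c : ℝ}
    (hc₀ : 0 < c) (hc₁ : c < 1) (hce : c • e' ≤ e) : e' = e := by
  rw [mem_extremePoints] at he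
  -- `e` lies strictly between `e'` and the point `y` obtained by extending the segment past `e`
  set y := AffineMap.lineMap e' e (1 - c)⁻¹ with hy
  have hc : 1 - c ≠ 0 := by linarith
  have hy_eq : y = (1 - c)⁻¹ • (e - c • e') := by
    rw [hy, AffineMap.lineMap_apply_module]; field_simp; module
  have hyS : y ∈ stdSimplex ℝ ι := by
    refine ⟨fun i => ?_, ?_⟩
    · rw [hy_eq]
      exact smul_nonneg (inv_nonneg.mpr (sub_pos.mpr hc₁).le) (sub_nonneg.mpr (hce i))
    · rw [hy_eq]
      simp only [Pi.smul_apply, Pi.sub_apply, smul_eq_mul, ← Finset.mul_sum, Finset.sum_sub_distrib,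
        he.1.1.2, he'.1.2]
      field_simp
  have hyA : y ∈ A := AffineMap.lineMap_mem _ he'.2 he.1.2
  have hseg : e ∈ openSegment ℝ y e' :=
    ⟨1 - c, c, by linarith, hc₀, by ring, by rw [hy_eq, smul_smul, mul_inv_cancel₀ hc]; module⟩
  exact (he.2 y ⟨hyS, hyA⟩ e' he' hseg).2

lemma finite_extremePoints_stdSimplex_inter (A : AffineSubspace ℝ (ι → ℝ)) :
    ((stdSimplex ℝ ι ∩ A).extremePoints ℝ).Finite := by
  refine Set.Finite.of_finite_image (f := fun e => {i | e i = 0}) (Set.toFinite _) ?_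
  intro e₁ he₁ e₂ he₂ hzero
  have hzero' : ∀ i, e₁ i = 0 ↔ e₂ i = 0 := fun i => Set.ext_iff.mp hzero i
  have hsmall : ∀ᶠ c in 𝓝 (0 : ℝ), ∀ i, c * e₂ i ≤ e₁ i := by
    refine eventually_all.mpr fun i => ?_
    rcases (he₁.1.1.1 i).lt_or_eq with hpos | hzero
    · have : Tendsto (· * e₂ i) (𝓝 0) (𝓝 0) := by
        simpa using (tendsto_id (x := 𝓝 (0 : ℝ))).mul_const (e₂ i)
      exact this.eventually (eventually_le_nhds hpos)
    · exact .of_forall fun c => by simp [← hzero, (hzero' i).mp hzero.symm]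
  obtain ⟨c, hc, hc₀, hc₁⟩ :=
    ((hsmall.filter_mono nhdsWithin_le_nhds).and (Ioo_mem_nhdsGT zero_lt_one)).exists
  exact (eq_of_smul_le_of_mem_extremePoints he₁ (extremePoints_subset he₂) hc₀ hc₁ hc).symm

end StdSimplexSlice

lemma Set.Finite.finite_extremePoints_convexHull_inter {E : Type*} [NormedAddCommGroup E]
    [NormedSpace ℝ E] [FiniteDimensional ℝ E] {s : Set E} (hs : s.Finite)
    (L : AffineSubspace ℝ E) : ((convexHull ℝ s ∩ L).extremePoints ℝ).Finite := by
  let := hs.fintype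
  set T : (s → ℝ) →L[ℝ] E :=
    LinearMap.toContinuousLinearMap (∑ x : s, (LinearMap.proj x).smulRight x.1)
  set K := stdSimplex ℝ s ∩ T ⁻¹' L
  have hN : convexHull ℝ s ∩ L = T '' K := by
    simp only [K, T, Set.image_inter_preimage, LinearMap.coe_toContinuousLinearMap',
      hs.convexHull_eq_image]
  have hK : IsCompact K :=
    (isCompact_stdSimplex ℝ s).inter_right (L.closed_of_finiteDimensional.preimage T.continuous)
  rw [hN]
  exact ((finite_extremePoints_stdSimplex_inter (L.comap T.toContinuousAffineMap.toAffineMap)).image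
    T).subset (surjOn_extremePoints_image T.toContinuousAffineMap hK)

lemma IsPolytope.inter_affineSubspace {n : ℕ} {P : Set (EuclideanSpace ℝ (Fin n))}
    (hP : IsPolytope P) (L : AffineSubspace ℝ (EuclideanSpace ℝ (Fin n)))
    (hne : (P ∩ L).Nonempty) : IsPolytope (P ∩ L) := by
  obtain ⟨S, -, rfl⟩ := hP
  have hfin := S.finite_toSet.finite_extremePoints_convexHull_inter L
  have hK : IsCompact (convexHull ℝ (S : Set (EuclideanSpace ℝ (Fin n))) ∩ L) :=
    (S.finite_toSet.isCompact_convexHull ℝ).inter_right L.closed_of_finiteDimensional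
  refine ⟨hfin.toFinset, by simpa using hK.extremePoints_nonempty hne, ?_⟩
  rw [hfin.coe_toFinset, ← (hfin.isClosed_convexHull ℝ).closure_eq,
    closure_convexHull_extremePoints hK ((convex_convexHull ℝ _).inter L.convex)]

section AffineSlice

variable {E : Type*} [NormedAddCommGroup E] [NormedSpace ℝ E]

lemma eventually_lineMap_mem {s : Set E} {x : E} (hs : s ∈ 𝓝 x) (y : E) :
    ∀ᶠ c in 𝓝 (0 : ℝ), AffineMap.lineMap x y c ∈ s :=
  (AffineMap.lineMap_continuous.tendsto' 0 x (by simp)) hs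

lemma affineSpan_inter_eq_of_mem_interior {s : Set E} {L : AffineSubspace ℝ E} {x : E}
    (hx : x ∈ interior s) (hxL : x ∈ L) : affineSpan ℝ (s ∩ L) = L := by
  refine le_antisymm (affineSpan_le.mpr inter_subset_right) fun y hyL => ?_
  obtain ⟨c, hcs, hc⟩ := ((eventually_lineMap_mem (mem_interior_iff_mem_nhds.mp hx) y).filter_mono
    nhdsWithin_le_nhds |>.and (self_mem_nhdsWithin (s := {0}ᶜ))).exists
  have hy : y = AffineMap.lineMap x (AffineMap.lineMap x y c) c⁻¹ := by
    rw [AffineMap.lineMap_lineMap_right, inv_mul_cancel₀ hc, AffineMap.lineMap_apply_one]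
  rw [hy]
  exact AffineMap.lineMap_mem _ (subset_affineSpan ℝ _ ⟨interior_subset hx, hxL⟩)
    (subset_affineSpan ℝ _ ⟨hcs, AffineMap.lineMap_mem c hxL hyL⟩)

lemma interior_inter_subset_intrinsicInterior (s : Set E) (L : AffineSubspace ℝ E) :
    interior s ∩ L ⊆ intrinsicInterior ℝ (s ∩ L) := by
  rintro x ⟨hx, hxL⟩
  have hspan := affineSpan_inter_eq_of_mem_interior hx hxL
  rw [mem_intrinsicInterior]
  refine ⟨⟨x, by rw [hspan]; exact hxL⟩, ?_, rfl⟩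
  refine interior_maximal (fun y hy => ?_) (isOpen_interior.preimage continuous_subtype_val) hx
  exact ⟨interior_subset hy, by simpa only [hspan, SetLike.mem_coe] using y.2⟩

lemma notMem_interior_of_forall_le {s : Set E} {L : AffineSubspace ℝ E} {ψ : StrongDual ℝ E}
    {m y : E} (hmL : m ∈ L) (hyL : y ∈ L) (hψ : ∀ x ∈ s ∩ L, ψ x ≤ ψ m) (hy : ψ m < ψ y) :
    m ∉ interior s := by
  intro hm
  obtain ⟨c, hcs, hc⟩ := ((eventually_lineMap_mem (mem_interior_iff_mem_nhds.mp hm) y).filter_mono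
    nhdsWithin_le_nhds |>.and (self_mem_nhdsWithin (s := Ioi 0))).exists
  have hle := hψ _ ⟨hcs, AffineMap.lineMap_mem c hmL hyL⟩
  rw [AffineMap.lineMap_apply_module, map_add, map_smul, map_smul, smul_eq_mul, smul_eq_mul] at hle
  nlinarith [hc]

end AffineSlice

lemma affineSpan_eq_of_not_collinear {E : Type*} [AddCommGroup E] [Module ℝ E]
    {L : AffineSubspace ℝ E} (hL : Module.finrank ℝ L.direction = 2) {a b c : E} (ha : a ∈ L)
    (hb : b ∈ L) (hc : c ∈ L) (h : ¬ Collinear ℝ {a, b, c}) : affineSpan ℝ {a, b, c} = L := by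
  have : FiniteDimensional ℝ L.direction := Module.finite_of_finrank_pos (by omega)
  have hspan := (affineIndependent_iff_not_collinear_set.mpr h)
    |>.affineSpan_eq_of_le_of_card_eq_finrank_add_one (sp := L) ?_ (by simp [hL])
  · rwa [Matrix.range_cons, Matrix.range_cons, Matrix.range_cons, Matrix.range_empty,
      union_empty, singleton_union, singleton_union] at hspan
  · rw [affineSpan_le]
    rintro _ ⟨i, rfl⟩
    fin_cases i <;> assumption

section Functionals

variable {E : Type*} [NormedAddCommGroup E] [NormedSpace ℝ E]

lemma isExposed_setOf_eq {A : Set E} {ψ : StrongDual ℝ E} {v : E} (hv : v ∈ A)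
    (hψ : ∀ x ∈ A, ψ x ≤ ψ v) : IsExposed ℝ A {x ∈ A | ψ x = ψ v} := fun _ => by
  refine ⟨ψ, Set.ext fun x => ⟨fun ⟨hx, hxv⟩ => ⟨hx, fun y hy => hxv ▸ hψ y hy⟩, ?_⟩⟩
  exact fun ⟨hx, hmax⟩ => ⟨hx, (hψ x hx).antisymm (hmax v hv)⟩

lemma IsExposed.exists_forall_lt_of_singleton {A : Set E} {v : E} (h : IsExposed ℝ A {v}) :
    ∃ f : StrongDual ℝ E, ∀ x ∈ A, x ≠ v → f x < f v := by
  obtain ⟨f, hf⟩ := h ⟨v, rfl⟩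
  have hv : v ∈ {x ∈ A | ∀ y ∈ A, f y ≤ f x} := hf ▸ rfl
  refine ⟨f, fun x hx hxv => (hv.2 x hx).lt_of_ne fun hfx => hxv ?_⟩
  exact (hf ▸ ⟨hx, fun y hy => hfx ▸ hv.2 y hy⟩ : x ∈ ({v} : Set E))

lemma vectorSpan_le_ker_of_forall_eq {s : Set E} {φ : StrongDual ℝ E} {c : ℝ}
    (h : ∀ x ∈ s, φ x = c) : vectorSpan ℝ s ≤ LinearMap.ker (φ : E →ₗ[ℝ] ℝ) := by
  rw [vectorSpan_def, Submodule.span_le]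
  rintro _ ⟨a, ha, b, hb, rfl⟩
  simp [h a ha, h b hb]

lemma affineSpan_subset_setOf_eq {s : Set E} {φ : StrongDual ℝ E} {v : E}
    (h : ∀ x ∈ s, φ x = φ v) : (affineSpan ℝ s : Set E) ⊆ {x | φ x = φ v} := by
  have hle : affineSpan ℝ s ≤ AffineSubspace.mk' v (LinearMap.ker (φ : E →ₗ[ℝ] ℝ)) :=
    affineSpan_le.mpr fun x hx => by simp [AffineSubspace.mem_mk', h x hx]
  intro x hx
  simpa [AffineSubspace.mem_mk', sub_eq_zero] using hle hx

lemma Convex.exists_forall_le_of_notMem_interior {P : Set E} (hP : Convex ℝ P) {z m : E}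
    (hz : z ∈ interior P) (hm : m ∉ interior P) :
    ∃ φ : StrongDual ℝ E, φ z < φ m ∧ ∀ x ∈ P, φ x ≤ φ m := by
  obtain ⟨φ, hφ⟩ := geometric_hahn_banach_open_point hP.interior isOpen_interior hm
  refine ⟨φ, hφ z hz, fun x hx => ?_⟩
  have hcl : P ⊆ closure (interior P) := by
    rw [hP.closure_interior_eq_closure_of_nonempty_interior ⟨z, hz⟩]
    exact subset_closure
  exact closure_minimal (fun y hy => (hφ y hy).le) (isClosed_le φ.continuous continuous_const)
    (hcl hx)

lemma exists_two_supporting_functionals {Q : Finset E} {v : E} (hv : v ∈ Q)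
    {f : StrongDual ℝ E} (hf : ∀ w ∈ Q, w ≠ v → f w < f v)
    (hdim : 1 < Module.finrank ℝ (vectorSpan ℝ (Q : Set E))) :
    ∃ w₁ ∈ Q, ∃ w₂ ∈ Q, ∃ ψ₁ ψ₂ : StrongDual ℝ E,
      (∀ w ∈ Q, ψ₁ w ≤ ψ₁ v) ∧ (∀ w ∈ Q, ψ₂ w ≤ ψ₂ v) ∧
      ψ₁ w₁ = ψ₁ v ∧ ψ₂ w₂ = ψ₂ v ∧ ψ₁ w₂ < ψ₁ v ∧ ψ₂ w₁ < ψ₂ v := by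
  classical
  have : FiniteDimensional ℝ (vectorSpan ℝ (Q : Set E)) := Module.finite_of_finrank_pos (by omega)
  obtain ⟨d, hdW, hfd, hd0⟩ : ∃ d ∈ vectorSpan ℝ (Q : Set E), f d = 0 ∧ d ≠ 0 := by
    obtain ⟨x, hx, hx0⟩ := (Submodule.ne_bot_iff _).mp (LinearMap.ker_ne_bot_of_finrank_lt
      (f := (f : E →ₗ[ℝ] ℝ).comp (vectorSpan ℝ (Q : Set E)).subtype) (by simpa using hdim))
    exact ⟨x, x.2, hx, by simpa using hx0⟩
  obtain ⟨g, hg⟩ := SeparatingDual.exists_ne_zero (R := ℝ) hd0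
  set R := Q.erase v
  have hfR : ∀ w ∈ R, 0 < f v - f w := fun w hw =>
    sub_pos.mpr (hf w (Finset.mem_of_mem_erase hw) (Finset.ne_of_mem_erase hw))
  -- `t w` is the slope of the edge direction `w - v` in the coordinates `(-f, g)`
  let t : E → ℝ := fun w => g (w - v) / (f v - f w)
  have hslope : ∀ w ∈ R, ∀ c : ℝ, (c • f + g) w - (c • f + g) v = (t w - c) * (f v - f w) := by
    intro w hw c
    have := (hfR w hw).ne'
    simp only [t, add_apply, smul_apply, smul_eq_mul, map_sub]
    field_simp
    ring
  have hR : R.Nonempty := by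
    rw [Finset.nonempty_iff_ne_empty]
    intro hR
    obtain rfl : Q = {v} :=
      ((Finset.erase_eq_empty_iff Q v).mp hR).resolve_left (Finset.ne_empty_of_mem hv)
    rw [Finset.coe_singleton, vectorSpan_singleton, finrank_bot] at hdim
    omega
  obtain ⟨w₁, hw₁, ht₁⟩ := R.exists_min_image t hR
  obtain ⟨w₂, hw₂, ht₂⟩ := R.exists_max_image t hR
  have hlt : t w₁ < t w₂ := by
    by_contra! h
    -- all slopes are equal, so `t w₁ • f + g` vanishes on `vectorSpan ℝ Q ∋ d`
    have hW :
        vectorSpan ℝ (Q : Set E) ≤ LinearMap.ker ((t w₁ • f + g : StrongDual ℝ E) : E →ₗ[ℝ] ℝ) := by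
      rw [vectorSpan_eq_span_vsub_set_right ℝ (Finset.mem_coe.mpr hv), Submodule.span_le]
      rintro _ ⟨w, hw, rfl⟩
      by_cases hwv : w = v
      · simp [hwv]
      · have hwR : w ∈ R := Finset.mem_erase.mpr ⟨hwv, hw⟩
        have := hslope w hwR (t w₁)
        rw [(ht₁ w hwR).antisymm' ((ht₂ w hwR).trans h), sub_self, zero_mul, ← map_sub] at this
        simpa using this
    exact hg (by simpa [hfd] using hW hdW)
  have hle : ∀ w ∈ Q, ∀ c : ℝ, (∀ w ∈ R, c ≤ t w) → (c • f + g) v ≤ (c • f + g) w := by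
    intro w hw c hc
    by_cases hwv : w = v
    · rw [hwv]
    have hwR : w ∈ R := Finset.mem_erase.mpr ⟨hwv, hw⟩
    nlinarith [hslope w hwR c, hc w hwR, hfR w hwR]
  have hge : ∀ w ∈ Q, ∀ c : ℝ, (∀ w ∈ R, t w ≤ c) → (c • f + g) w ≤ (c • f + g) v := by
    intro w hw c hc
    by_cases hwv : w = v
    · rw [hwv]
    have hwR : w ∈ R := Finset.mem_erase.mpr ⟨hwv, hw⟩
    nlinarith [hslope w hwR c, hc w hwR, hfR w hwR]
  refine ⟨w₁, Finset.mem_of_mem_erase hw₁, w₂, Finset.mem_of_mem_erase hw₂, -(t w₁ • f + g),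
    t w₂ • f + g, fun w hw => neg_le_neg (hle w hw _ ht₁), fun w hw => hge w hw _ ht₂,
    ?_, ?_, ?_, ?_⟩
  · rw [neg_apply, neg_apply, neg_inj, ← sub_eq_zero, hslope w₁ hw₁, sub_self, zero_mul]
  · rw [← sub_eq_zero, hslope w₂ hw₂, sub_self, zero_mul]
  · rw [neg_apply, neg_apply, neg_lt_neg_iff]
    nlinarith [hslope w₂ hw₂ (t w₁), hfR w₂ hw₂]
  · nlinarith [hslope w₁ hw₁ (t w₂), hfR w₁ hw₁]

end Functionals

section Faces

variable {n : ℕ}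

lemma collinear_iff_pdim_le_one {s : Set (EuclideanSpace ℝ (Fin n))} :
    Collinear ℝ s ↔ pdim s ≤ 1 := by
  rw [pdim, direction_affineSpan, collinear_iff_finrank_le_one]

lemma pdim_le_of_forall_eq {k : ℕ} {T : Set (EuclideanSpace ℝ (Fin (k + 1)))}
    {φ : StrongDual ℝ (EuclideanSpace ℝ (Fin (k + 1)))} (hφ : φ ≠ 0) {c : ℝ}
    (hT : ∀ x ∈ T, φ x = c) : pdim T ≤ k := by
  have hker : LinearMap.ker (φ : EuclideanSpace ℝ (Fin (k + 1)) →ₗ[ℝ] ℝ) ≠ ⊤ := by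
    rw [Ne, LinearMap.ker_eq_top]
    exact fun h => hφ (ContinuousLinearMap.coe_injective h)
  have hlt := Submodule.finrank_lt hker
  rw [finrank_euclideanSpace_fin] at hlt
  have := Submodule.finrank_mono (vectorSpan_le_ker_of_forall_eq hT)
  rw [pdim, direction_affineSpan]
  omega

lemma isFaceDim_setOf_eq_one {N : Set (EuclideanSpace ℝ (Fin n))} (hdim : pdim N = 2)
    {ψ : StrongDual ℝ (EuclideanSpace ℝ (Fin n))} {v w w' : EuclideanSpace ℝ (Fin n)}
    (hv : v ∈ N) (hw : w ∈ N) (hw' : w' ∈ N) (hψ : ∀ x ∈ N, ψ x ≤ ψ v) (hwv : w ≠ v)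
    (hψw : ψ w = ψ v) (hψw' : ψ w' < ψ v) : IsFaceDim N {x ∈ N | ψ x = ψ v} 1 := by
  refine ⟨isExposed_setOf_eq hv hψ, ⟨v, hv, rfl⟩, le_antisymm ?_ ?_⟩
  · -- the edge spans a proper subspace of the two-dimensional `vectorSpan ℝ N`
    have hle : vectorSpan ℝ {x ∈ N | ψ x = ψ v} ≤ vectorSpan ℝ N ⊓ LinearMap.ker (ψ : _ →ₗ[ℝ] ℝ) :=
      le_inf (vectorSpan_mono ℝ (sep_subset _ _)) (vectorSpan_le_ker_of_forall_eq fun x hx => hx.2)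
    have hlt : vectorSpan ℝ N ⊓ LinearMap.ker (ψ : _ →ₗ[ℝ] ℝ) < vectorSpan ℝ N := by
      refine inf_lt_left.mpr fun h => hψw'.ne ?_
      simpa [sub_eq_zero] using h (vsub_mem_vectorSpan ℝ hw' hv)
    rw [pdim, direction_affineSpan] at hdim ⊢
    have := Submodule.finrank_mono hle
    have := Submodule.finrank_lt_finrank_of_lt hlt
    omega
  · rw [pdim, direction_affineSpan, Nat.one_le_iff_ne_zero, Ne, Submodule.finrank_eq_zero]
    intro h
    have := vsub_mem_vectorSpan ℝ (show w ∈ {x ∈ N | ψ x = ψ v} from ⟨hw, hψw⟩) ⟨hv, rfl⟩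
    rw [h, Submodule.mem_bot, vsub_eq_sub, sub_eq_zero] at this
    exact hwv this

lemma IsPolytope.exists_two_supporting_functionals {N : Set (EuclideanSpace ℝ (Fin n))}
    (hN : IsPolytope N) (hdim : pdim N = 2) {v : EuclideanSpace ℝ (Fin n)}
    (hv : IsFaceDim N {v} 0) :
    ∃ w₁ ∈ N, ∃ w₂ ∈ N, ∃ ψ₁ ψ₂ : StrongDual ℝ (EuclideanSpace ℝ (Fin n)),
      (∀ x ∈ N, ψ₁ x ≤ ψ₁ v) ∧ (∀ x ∈ N, ψ₂ x ≤ ψ₂ v) ∧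
      ψ₁ w₁ = ψ₁ v ∧ ψ₂ w₂ = ψ₂ v ∧ ψ₁ w₂ < ψ₁ v ∧ ψ₂ w₁ < ψ₂ v := by
  obtain ⟨Q, -, rfl⟩ := hN
  obtain ⟨f, hf⟩ := hv.1.exists_forall_lt_of_singleton
  have hvQ : v ∈ Q := extremePoints_convexHull_subset (isExtreme_singleton.mp hv.1.isExtreme)
  have hdimQ : 1 < Module.finrank ℝ (vectorSpan ℝ (Q : Set (EuclideanSpace ℝ (Fin n)))) := by
    rw [pdim, affineSpan_convexHull, direction_affineSpan] at hdim
    omega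
  obtain ⟨w₁, hw₁, w₂, hw₂, ψ₁, ψ₂, hψ₁, hψ₂, h⟩ := _root_.exists_two_supporting_functionals hvQ
    (fun w hw hwv => hf w (subset_convexHull ℝ _ hw) hwv) hdimQ
  have hhull : ∀ ψ : StrongDual ℝ (EuclideanSpace ℝ (Fin n)), (∀ w ∈ Q, ψ w ≤ ψ v) →
      ∀ x ∈ convexHull ℝ (Q : Set (EuclideanSpace ℝ (Fin n))), ψ x ≤ ψ v := fun ψ hψ x hx =>
    convexHull_min (t := {x | ψ x ≤ ψ v}) hψ (convex_halfSpace_le ⟨ψ.map_add, ψ.map_smul⟩ (ψ v)) hx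
  exact ⟨w₁, subset_convexHull ℝ _ hw₁, w₂, subset_convexHull ℝ _ hw₂, ψ₁, ψ₂, hhull ψ₁ hψ₁,
    hhull ψ₂ hψ₂, h⟩

end Faces

section Facets

variable {k : ℕ} {P : Set (EuclideanSpace ℝ (Fin (k + 1)))}

lemma exists_facet_of_midpoint_notMem_interior (hP : Convex ℝ P)
    {z v w : EuclideanSpace ℝ (Fin (k + 1))} (hz : z ∈ interior P) (hv : v ∈ P) (hw : w ∈ P)
    (hmid : midpoint ℝ v w ∉ interior P)
    (hvw : ∀ F, IsExposed ℝ P F → F ≠ P → v ∈ F → w ∈ F → k ≤ pdim F) :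
    ∃ φ : StrongDual ℝ (EuclideanSpace ℝ (Fin (k + 1))),
      φ z < φ v ∧ φ w = φ v ∧ IsFaceDim P {x ∈ P | φ x = φ v} k := by
  obtain ⟨φ, hφz, hφP⟩ := hP.exists_forall_le_of_notMem_interior hz hmid
  have hφm : φ (midpoint ℝ v w) = (φ v + φ w) / 2 := by
    rw [midpoint_eq_smul_add, map_smul, map_add, smul_eq_mul, invOf_eq_inv]
    ring
  have hφv : φ v = φ (midpoint ℝ v w) := by linarith [hφP v hv, hφP w hw]
  have hφw : φ w = φ v := by linarith [hφP v hv, hφP w hw]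
  have hT := isExposed_setOf_eq hv fun x hx => hφv ▸ hφP x hx
  refine ⟨φ, hφv ▸ hφz, hφw, hT, ⟨v, hv, rfl⟩, le_antisymm ?_ ?_⟩
  · exact pdim_le_of_forall_eq (fun h => by simp [h] at hφz) fun x hx => hx.2
  · refine hvw _ hT (fun h => ?_) ⟨hv, rfl⟩ ⟨hw, hφw⟩
    have hzT : z ∈ {x ∈ P | φ x = φ v} := by rw [h]; exact interior_subset hz
    linarith [hzT.2]

lemma exists_facet_supset_edge (hP : Convex ℝ P)
    {L : AffineSubspace ℝ (EuclideanSpace ℝ (Fin (k + 1)))}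
    {z : EuclideanSpace ℝ (Fin (k + 1))} (hz : z ∈ interior P) (hdim : pdim (P ∩ L) = 2)
    (hgen : ∀ F, IsExposed ℝ P F → F ≠ P → pdim F < k → (F ∩ L).Subsingleton)
    {ψ : StrongDual ℝ (EuclideanSpace ℝ (Fin (k + 1)))} {v w w' : EuclideanSpace ℝ (Fin (k + 1))}
    (hv : v ∈ P ∩ L) (hw : w ∈ P ∩ L) (hw' : w' ∈ P ∩ L) (hψ : ∀ x ∈ P ∩ L, ψ x ≤ ψ v)
    (hwv : w ≠ v) (hψw : ψ w = ψ v) (hψw' : ψ w' < ψ v) :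
    IsFaceDim (P ∩ L) {x ∈ P ∩ L | ψ x = ψ v} 1 ∧
      ∃ φ : StrongDual ℝ (EuclideanSpace ℝ (Fin (k + 1))), φ z < φ v ∧ φ w = φ v ∧
        IsFaceDim P {x ∈ P | φ x = φ v} k ∧ {x ∈ P ∩ L | ψ x = ψ v} ⊆ {x ∈ P | φ x = φ v} := by
  have hS := isFaceDim_setOf_eq_one hdim hv hw hw' hψ hwv hψw hψw'
  have hψm : ψ (midpoint ℝ v w) = ψ v := by
    rw [midpoint_eq_smul_add, map_smul, map_add, smul_eq_mul, invOf_eq_inv, hψw]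
    ring
  -- `ψ` is maximal at the midpoint of the edge but not constant on the plane
  have hmid : midpoint ℝ v w ∉ interior P := by
    refine notMem_interior_of_forall_le (AffineMap.lineMap_mem _ hv.2 hw.2)
      (AffineMap.lineMap_mem 2 hw'.2 hv.2) (hψm ▸ hψ) ?_
    rw [hψm, AffineMap.lineMap_apply_module, map_add, map_smul, map_smul, smul_eq_mul, smul_eq_mul]
    linarith
  obtain ⟨φ, hφz, hφw, hT⟩ := exists_facet_of_midpoint_notMem_interior hP hz hv.1 hw.1 hmid
    fun F hF hFP hvF hwF => not_lt.mp fun hlt => hwv (hgen F hF hFP hlt ⟨hwF, hw.2⟩ ⟨hvF, hv.2⟩)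
  refine ⟨hS, φ, hφz, hφw, hT, fun x hx => ⟨hx.1.1, ?_⟩⟩
  have hxline := (collinear_iff_pdim_le_one.mpr hS.2.2.le).mem_affineSpan_of_mem_of_ne
    ⟨hv, rfl⟩ ⟨hw, hψw⟩ hx hwv.symm
  exact affineSpan_subset_setOf_eq (by simp [hφw]) hxline

lemma exists_distinct_facets_at_vertex (hP : Convex ℝ P)
    {L : AffineSubspace ℝ (EuclideanSpace ℝ (Fin (k + 1)))} (hL : Module.finrank ℝ L.direction = 2)
    {z : EuclideanSpace ℝ (Fin (k + 1))} (hz : z ∈ interior P) (hzL : z ∈ L)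
    (hN : IsPolytope (P ∩ L))
    (hgen : ∀ F, IsExposed ℝ P F → F ≠ P → pdim F < k → (F ∩ L).Subsingleton)
    {v : EuclideanSpace ℝ (Fin (k + 1))} (hv : IsFaceDim (P ∩ L) {v} 0) :
    ∃ S₁ S₂ T₁ T₂ : Set (EuclideanSpace ℝ (Fin (k + 1))), S₁ ≠ S₂ ∧
      IsFaceDim (P ∩ L) S₁ 1 ∧ IsFaceDim (P ∩ L) S₂ 1 ∧ v ∈ S₁ ∧ v ∈ S₂ ∧
      IsFaceDim P T₁ k ∧ IsFaceDim P T₂ k ∧ T₁ ≠ T₂ ∧ S₁ ⊆ T₁ ∧ S₂ ⊆ T₂ := by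
  have hdim : pdim (P ∩ L) = 2 := by rw [pdim, affineSpan_inter_eq_of_mem_interior hz hzL, hL]
  have hvN : v ∈ P ∩ L := hv.1.subset rfl
  obtain ⟨w₁, hw₁, w₂, hw₂, ψ₁, ψ₂, hψ₁, hψ₂, hψ₁w₁, hψ₂w₂, hψ₁w₂, hψ₂w₁⟩ :=
    hN.exists_two_supporting_functionals hdim hv
  have hw₁v : w₁ ≠ v := by rintro rfl; exact hψ₂w₁.false
  have hw₂v : w₂ ≠ v := by rintro rfl; exact hψ₁w₂.false
  obtain ⟨hS₁, φ₁, hφ₁z, hφ₁w₁, hT₁, hST₁⟩ :=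
    exists_facet_supset_edge hP hz hdim hgen hvN hw₁ hw₂ hψ₁ hw₁v hψ₁w₁ hψ₁w₂
  obtain ⟨hS₂, φ₂, -, -, hT₂, hST₂⟩ :=
    exists_facet_supset_edge hP hz hdim hgen hvN hw₂ hw₁ hψ₂ hw₂v hψ₂w₂ hψ₂w₁
  refine ⟨_, _, _, _, fun h => ?_, hS₁, hS₂, ⟨hvN, rfl⟩, ⟨hvN, rfl⟩, hT₁, hT₂, fun h => ?_,
    hST₁, hST₂⟩
  · have hw₁S₂ : w₁ ∈ {x ∈ P ∩ L | ψ₂ x = ψ₂ v} := by rw [← h]; exact ⟨hw₁, hψ₁w₁⟩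
    exact hψ₂w₁.ne hw₁S₂.2
  · -- `φ₁` would be constant on the triangle `v w₁ w₂`, which spans the plane `L ∋ z`
    have hφ₁w₂ : φ₁ w₂ = φ₁ v := by
      have : w₂ ∈ {x ∈ P | φ₁ x = φ₁ v} := by rw [h]; exact hST₂ ⟨hw₂, hψ₂w₂⟩
      exact this.2
    have hncol : ¬ Collinear ℝ {v, w₁, w₂} := fun hcol => hψ₁w₂.ne <|
      affineSpan_subset_setOf_eq (s := {v, w₁}) (by simp [hψ₁w₁])
        (hcol.mem_affineSpan_of_mem_of_ne (by simp) (by simp) (by simp) hw₁v.symm)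
    have hzspan : z ∈ affineSpan ℝ {v, w₁, w₂} := by
      rw [affineSpan_eq_of_not_collinear hL hvN.2 hw₁.2 hw₂.2 hncol]
      exact hzL
    exact hφ₁z.ne (affineSpan_subset_setOf_eq (by simp [hφ₁w₁, hφ₁w₂]) hzspan)

end Facets

theorem folding_plane_section_general {k : ℕ} (P : Set (EuclideanSpace ℝ (Fin (k + 1))))
    (hP : IsPolytope P)
    (p u : EuclideanSpace ℝ (Fin (k + 1)))
    (hint : ∃ s : ℝ, p + s • u ∈ interior P)
    (hgen : ∀ F, IsExposed ℝ P F → F ≠ P → pdim F ≤ k - 1 →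
      ∀ x y, x ∈ F → y ∈ F → x ≠ y → ¬ Coplanar ℝ {x, y, p, p + u})
    (L : AffineSubspace ℝ (EuclideanSpace ℝ (Fin (k + 1))))
    (hL : Module.finrank ℝ L.direction = 2) (hpL : p ∈ L) (hpuL : p + u ∈ L)
    (N : Set (EuclideanSpace ℝ (Fin (k + 1)))) (hN : N = P ∩ L) :
    (IsPolytope N ∧ pdim N = 2) ∧
    (∃ a b : ℝ, a < b ∧ ∀ s ∈ Set.Icc a b, p + s • u ∈ intrinsicInterior ℝ N) ∧
    ∀ v : EuclideanSpace ℝ (Fin (k + 1)), IsFaceDim N {v} 0 → (∀ s : ℝ, v ≠ p + s • u) →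
      ∃ S₁ S₂ T₁ T₂ : Set (EuclideanSpace ℝ (Fin (k + 1))), S₁ ≠ S₂ ∧
        IsFaceDim N S₁ 1 ∧ IsFaceDim N S₂ 1 ∧ v ∈ S₁ ∧ v ∈ S₂ ∧
        IsFaceDim P T₁ k ∧ IsFaceDim P T₂ k ∧ T₁ ≠ T₂ ∧ S₁ ⊆ T₁ ∧ S₂ ⊆ T₂ := by
  subst hN
  obtain ⟨s₀, hs₀⟩ := hint
  have hqL : ∀ s : ℝ, p + s • u ∈ L := fun s => by
    simpa [AffineMap.lineMap_apply, add_comm] using AffineMap.lineMap_mem s hpL hpuL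
  have hPconv : Convex ℝ P := by
    obtain ⟨S, -, rfl⟩ := hP
    exact convex_convexHull ℝ _
  have hNpoly := hP.inter_affineSubspace L ⟨_, interior_subset hs₀, hqL s₀⟩
  have hgenL : ∀ F, IsExposed ℝ P F → F ≠ P → pdim F < k → (F ∩ L).Subsingleton := by
    rintro F hF hFP hlt x ⟨hxF, hxL⟩ y ⟨hyF, hyL⟩
    by_contra hxy
    refine hgen F hF hFP (by omega) x y hxF hyF hxy
      ((coplanar_iff_finrank_le_two.mpr hL.le).subset ?_)
    simp [insert_subset_iff, hxL, hyL, hpL, hpuL]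
  refine ⟨⟨hNpoly, by rw [pdim, affineSpan_inter_eq_of_mem_interior hs₀ (hqL s₀), hL]⟩, ?_,
    fun v hv _ => exists_distinct_facets_at_vertex hPconv hL hs₀ (hqL s₀) hNpoly hgenL hv⟩
  have hopen : (fun s : ℝ => p + s • u) ⁻¹' interior P ∈ 𝓝 s₀ :=
    (isOpen_interior.preimage (by fun_prop)).mem_nhds hs₀
  obtain ⟨ε, hε, hball⟩ := Metric.nhds_basis_closedBall.mem_iff.mp hopen
  refine ⟨s₀ - ε, s₀ + ε, by linarith, fun s hs => ?_⟩
  rw [← Real.closedBall_eq_Icc] at hs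
  exact interior_inter_subset_intrinsicInterior P L ⟨hball hs, hqL s⟩

/-- A 2-plane L containing a generic line q through the interior of a full-dimensional
polytope P cuts P in a polygon N containing a segment of q in its interior, and at
each vertex of N off q the two sides of N lie in two distinct facets of P. -/
theorem folding_plane_section {k : ℕ} (P : Set (EuclideanSpace ℝ (Fin (k + 1))))
    (hP : IsPolytope P) (hd : pdim P = k + 1)
    (p u : EuclideanSpace ℝ (Fin (k + 1))) (hu : u ≠ 0)
    (hint : ∃ s : ℝ, p + s • u ∈ interior P)
    (hgen : ∀ F, IsExposed ℝ P F → F ≠ P → pdim F ≤ k - 1 →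
      ∀ x y, x ∈ F → y ∈ F → x ≠ y → ¬ Coplanar ℝ {x, y, p, p + u})
    (L : AffineSubspace ℝ (EuclideanSpace ℝ (Fin (k + 1))))
    (hL : Module.finrank ℝ L.direction = 2) (hpL : p ∈ L) (hpuL : p + u ∈ L)
    (N : Set (EuclideanSpace ℝ (Fin (k + 1)))) (hN : N = P ∩ L) :
    (IsPolytope N ∧ pdim N = 2) ∧
    (∃ a b : ℝ, a < b ∧ ∀ s ∈ Set.Icc a b, p + s • u ∈ intrinsicInterior ℝ N) ∧
    ∀ v : EuclideanSpace ℝ (Fin (k + 1)), IsFaceDim N {v} 0 → (∀ s : ℝ, v ≠ p + s • u) →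
      ∃ S₁ S₂ T₁ T₂ : Set (EuclideanSpace ℝ (Fin (k + 1))), S₁ ≠ S₂ ∧
        IsFaceDim N S₁ 1 ∧ IsFaceDim N S₂ 1 ∧ v ∈ S₁ ∧ v ∈ S₂ ∧
        IsFaceDim P T₁ k ∧ IsFaceDim P T₂ k ∧ T₁ ≠ T₂ ∧ S₁ ⊆ T₁ ∧ S₂ ⊆ T₂ :=
  folding_plane_section_general P hP p u hint hgen L hL hpL hpuL N hN
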